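/- Let U ⊆ B(H) be a hyperreflexive weak* closed masa-bimodule, and let V ⊆ B(H) be a masa-bimodule for which there exist λ > 0 and a sequence (Φ_n) of Schur idempotents in 𝔉H with sup_n ‖Φ_n‖ < ∞, Φ_{n+1} ≤ Φ_n for all n, V = ⋂_n ran Φ_n, and λ(Φ_n) ≤ λ for all n. Then the intersection W = U ∩ V is hyperreflexive and k(W) ≤ λ + (1 + λ)·k(U). -/

import Mathlib

/-!
Fix `T` and `A ∈ U`. The Schur multipliers `Φₙ` leave the reflexive masa-bimodule `U` invariant,
and the `λ`-inequality gives `‖T - Φₙ A‖ ≤ ‖T - Φₙ T‖ + ‖Φₙ (T - A)‖ ≤ λ α(T, W) + (1 + λ) ‖T - A‖`.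
Since `Φₘ Φₙ = Φₙ` for `m ≤ n`, a weak* cluster point of the bounded sequence `Φₙ A` lies in `U`
and in every `ran Φₘ`, i.e. in `W`, and obeys the same bound. Hence
`d(T, W) ≤ λ α(T, W) + (1 + λ) d(T, U) ≤ (λ + (1 + λ) k) α(T, W)` for every constant `k` of `U`.
-/

open scoped InnerProductSpace Pointwise

noncomputable section

namespace SchurHyper

/-- `B H` is the algebra of bounded linear operators on `H`. -/
abbrev B (H : Type*) [NormedAddCommGroup H] [InnerProductSpace ℂ H] : Type _ := H →L[ℂ] H

variable (H : Type*) [NormedAddCommGroup H] [InnerProductSpace ℂ H]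

/-- A linear functional on `B H` is *normal* (weak* continuous) if it arises from
the duality with the trace class, i.e. it is of the form
`T ↦ ∑ₙ ⟪yₙ, T xₙ⟫` for square-summable sequences `(xₙ)`, `(yₙ)`
(recall that the inner product is conjugate-linear in its first slot). -/
def IsNormalFunctional (ω : B H →ₗ[ℂ] ℂ) : Prop :=
  ∃ x y : ℕ → H, Summable (fun n => ‖x n‖ ^ 2) ∧ Summable (fun n => ‖y n‖ ^ 2) ∧
    ∀ T : B H, ω T = ∑' n, ⟪y n, T (x n)⟫_ℂ

/-- The weak* topology on `B H`: the topology induced by the normal functionals. -/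
def weakStarTopology : TopologicalSpace (B H) :=
  TopologicalSpace.induced
    (fun (T : B H) (ω : {ω : B H →ₗ[ℂ] ℂ // IsNormalFunctional H ω}) => ω.1 T)
    inferInstance

/-- A set of operators is weak* closed if it is closed in the weak* topology. -/
def WStarClosed (X : Set (B H)) : Prop := @IsClosed _ (weakStarTopology H) X

/-- The weak* closure of a set of operators. -/
def wStarClosure (X : Set (B H)) : Set (B H) := @closure _ (weakStarTopology H) X

/-- A map on `B H` is weak* continuous if it is continuous with respect to the
weak* topology on both sides. -/
def WStarContinuous (Φ : B H →L[ℂ] B H) : Prop :=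
  @Continuous _ _ (weakStarTopology H) (weakStarTopology H) Φ

variable {H}
variable [CompleteSpace H]

/-- A maximal abelian selfadjoint subalgebra of `B H`: an abelian selfadjoint
subalgebra which contains every operator commuting with it (equivalently, it
coincides with its own commutant). -/
def IsMasa (D : StarSubalgebra ℂ (B H)) : Prop :=
  (∀ A ∈ D, ∀ C ∈ D, A * C = C * A) ∧
  (∀ T : B H, (∀ A ∈ D, T * A = A * T) → T ∈ D)

/-- A Schur multiplier: a weak* continuous `D`-bimodule map on `B H`. -/
def IsSchurMultiplier (D : StarSubalgebra ℂ (B H)) (Φ : B H →L[ℂ] B H) : Prop :=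
  WStarContinuous H Φ ∧ ∀ A ∈ D, ∀ C ∈ D, ∀ T : B H, Φ (A * T * C) = A * Φ T * C

/-- A Schur idempotent: an idempotent Schur multiplier. -/
def IsSchurIdempotent (D : StarSubalgebra ℂ (B H)) (Φ : B H →L[ℂ] B H) : Prop :=
  IsSchurMultiplier D Φ ∧ Φ.comp Φ = Φ

/-- A subspace `X ⊆ B H` is a `D`-bimodule if `D X D ⊆ X`. -/
def IsBimodule (D : StarSubalgebra ℂ (B H)) (X : Submodule ℂ (B H)) : Prop :=
  ∀ A ∈ D, ∀ C ∈ D, ∀ T ∈ X, A * T * C ∈ X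

/-- The Arveson distance `α(T, X)`. -/
def arveson (T : B H) (X : Set (B H)) : ℝ :=
  ⨆ ξ : {ξ : H // ‖ξ‖ = 1}, ⨅ S : X, ‖T ξ.1 - S.1 ξ.1‖

/-- The set of hyperreflexivity constants of `X`. -/
def hyperSet (X : Set (B H)) : Set ℝ :=
  {k | 0 < k ∧ ∀ T : B H, Metric.infDist T X ≤ k * arveson T X}

/-- A subspace is hyperreflexive if `d(T, X) ≤ k ⬝ α(T, X)` for some `k > 0`. -/
def Hyperreflexive (X : Set (B H)) : Prop := (hyperSet X).Nonempty

/-- The hyperreflexivity constant `k(X)`: the least constant that works. -/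
def hyperConst (X : Set (B H)) : ℝ := sInf (hyperSet X)

/-- The set of constants `λ` witnessing that a Schur idempotent lies in `𝔉H`. -/
def lamSet (Φ : B H →L[ℂ] B H) : Set ℝ :=
  {l | 0 < l ∧ ∀ T : B H, ‖T - Φ T‖ ≤ l * arveson T (Set.range Φ)}

/-- The class `𝔉H` of Schur idempotents `Φ` such that
`‖T - Φ T‖ ≤ λ ⬝ α(T, ran Φ)` for some `λ > 0` and all `T`. -/
def MemFH (D : StarSubalgebra ℂ (B H)) (Φ : B H →L[ℂ] B H) : Prop :=
  IsSchurIdempotent D Φ ∧ (lamSet Φ).Nonempty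

/-- The constant `λ(Φ)`: the least constant witnessing membership of `𝔉H`. -/
def lam (Φ : B H →L[ℂ] B H) : ℝ := sInf (lamSet Φ)

/-- A ternary masa-bimodule condition: `S T* R ∈ M` whenever `S, T, R ∈ M`. -/
def IsTernary (M : Submodule ℂ (B H)) : Prop :=
  ∀ S ∈ M, ∀ T ∈ M, ∀ R ∈ M, S * star T * R ∈ M

end SchurHyper

open SchurHyper

open Filter Topology

open Module.End in
lemma ContinuousLinearMap.commute_starProjection_of_mem_invtSubmodule
    {𝕜 E : Type*} [RCLike 𝕜] [NormedAddCommGroup E] [InnerProductSpace 𝕜 E] [CompleteSpace E]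
    {K : Submodule 𝕜 E} [K.HasOrthogonalProjection] {A : E →L[𝕜] E}
    (hA : K ∈ invtSubmodule (A : E →ₗ[𝕜] E))
    (hA' : K ∈ invtSubmodule (ContinuousLinearMap.adjoint A : E →ₗ[𝕜] E)) :
    Commute K.starProjection A :=
  (ContinuousLinearMap.IsIdempotentElem.commute_iff K.isIdempotentElem_starProjection).2
    ⟨by rwa [Submodule.range_starProjection],
      by rwa [Submodule.ker_starProjection, ← ContinuousLinearMap.mem_invtSubmodule_adjoint_iff]⟩

lemma summable_norm_mul_norm {E : Type*} [SeminormedAddCommGroup E] {x y : ℕ → E}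
    (hx : Summable fun n => ‖x n‖ ^ 2) (hy : Summable fun n => ‖y n‖ ^ 2) :
    Summable fun n => ‖y n‖ * ‖x n‖ :=
  ((hx.add hy).div_const 2).of_nonneg_of_le (fun n => by positivity)
    fun n => by nlinarith [two_mul_le_add_sq ‖y n‖ ‖x n‖]

section WeakOperatorLimit

variable {ι 𝕜 E : Type*} [RCLike 𝕜] [NormedAddCommGroup E] [InnerProductSpace 𝕜 E]

lemma ContinuousLinearMap.norm_inner_apply_le (T : E →L[𝕜] E) (ξ η : E) :
    ‖⟪η, T ξ⟫_𝕜‖ ≤ ‖T‖ * (‖η‖ * ‖ξ‖) :=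
  calc ‖⟪η, T ξ⟫_𝕜‖ ≤ ‖η‖ * (‖T‖ * ‖ξ‖) :=
        (norm_inner_le_norm _ _).trans (mul_le_mul_of_nonneg_left (T.le_opNorm ξ) (norm_nonneg _))
    _ = ‖T‖ * (‖η‖ * ‖ξ‖) := by ring

lemma Ultrafilter.exists_tendsto_of_norm_le {F : Type*} [NormedAddCommGroup F] [ProperSpace F]
    (𝒰 : Ultrafilter ι) {f : ι → F} {C : ℝ} (hf : ∀ i, ‖f i‖ ≤ C) : ∃ a, Tendsto f 𝒰 (𝓝 a) := by
  obtain ⟨a, -, ha⟩ := (isCompact_closedBall (0 : F) C).ultrafilter_le_nhds' (𝒰.map f)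
    (Ultrafilter.mem_map.2 (univ_mem' fun i => mem_closedBall_zero_iff.2 (hf i)))
  exact ⟨a, ha⟩

lemma exists_tendsto_inner_apply_of_norm_le [CompleteSpace E] (𝒰 : Ultrafilter ι)
    {g : ι → E →L[𝕜] E} {C : ℝ} (hg : ∀ i, ‖g i‖ ≤ C) :
    ∃ A : E →L[𝕜] E, ∀ ξ η, Tendsto (fun i => ⟪η, g i ξ⟫_𝕜) 𝒰 (𝓝 ⟪η, A ξ⟫_𝕜) := by
  have hbound : ∀ η ξ i, ‖⟪η, g i ξ⟫_𝕜‖ ≤ C * ‖η‖ * ‖ξ‖ := fun η ξ i =>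
    ((g i).norm_inner_apply_le ξ η).trans (by
      rw [mul_assoc]; exact mul_le_mul_of_nonneg_right (hg i) (by positivity))
  set L : E → E → 𝕜 := fun η ξ => limUnder (𝒰 : Filter ι) fun i => ⟪η, g i ξ⟫_𝕜
  have hL : ∀ η ξ, Tendsto (fun i => ⟪η, g i ξ⟫_𝕜) 𝒰 (𝓝 (L η ξ)) := fun η ξ =>
    tendsto_nhds_limUnder (𝒰.exists_tendsto_of_norm_le (hbound η ξ))
  have hL_eq : ∀ {η ξ a}, Tendsto (fun i => ⟪η, g i ξ⟫_𝕜) 𝒰 (𝓝 a) → L η ξ = a :=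
    tendsto_nhds_unique (hL _ _)
  let B : E →L⋆[𝕜] E →L[𝕜] 𝕜 := LinearMap.mkContinuous₂
    (LinearMap.mk₂'ₛₗ (starRingEnd 𝕜) (RingHom.id 𝕜) L
      (fun η η' ξ => hL_eq (by simpa [inner_add_left] using (hL η ξ).add (hL η' ξ)))
      (fun c η ξ => hL_eq (by simpa [inner_smul_left] using (hL η ξ).const_mul _))
      (fun η ξ ξ' => hL_eq (by simpa [inner_add_right] using (hL η ξ).add (hL η ξ')))
      (fun c η ξ => hL_eq (by simpa [inner_smul_right] using (hL η ξ).const_mul c)))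
    C fun η ξ => le_of_tendsto' (hL η ξ).norm (hbound η ξ)
  refine ⟨ContinuousLinearMap.adjoint (InnerProductSpace.continuousLinearMapOfBilin B),
    fun ξ η => ?_⟩
  rw [ContinuousLinearMap.adjoint_inner_right, InnerProductSpace.continuousLinearMapOfBilin_apply]
  exact hL η ξ

lemma norm_le_of_tendsto_inner_apply {F : Filter ι} [F.NeBot] {g : ι → E →L[𝕜] E}
    {A : E →L[𝕜] E} {C : ℝ} (hg : ∀ i, ‖g i‖ ≤ C)
    (hA : ∀ ξ η, Tendsto (fun i => ⟪η, g i ξ⟫_𝕜) F (𝓝 ⟪η, A ξ⟫_𝕜)) : ‖A‖ ≤ C := by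
  have hC : 0 ≤ C := (norm_nonneg _).trans (hg F.nonempty_of_neBot.some)
  refine A.opNorm_le_of_re_inner_le hC fun ξ η hξ hη => ?_
  rw [← inner_conj_symm, RCLike.conj_re]
  refine le_of_tendsto' ((RCLike.continuous_re.tendsto _).comp (hA ξ η)) fun i => ?_
  calc RCLike.re ⟪η, g i ξ⟫_𝕜 ≤ ‖⟪η, g i ξ⟫_𝕜‖ := RCLike.re_le_norm _
    _ ≤ ‖g i‖ * (‖η‖ * ‖ξ‖) := (g i).norm_inner_apply_le ξ η
    _ ≤ C := by rw [hξ, hη, mul_one, mul_one]; exact hg i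

end WeakOperatorLimit

namespace SchurHyper

section WeakStar

variable {H : Type*} [NormedAddCommGroup H] [InnerProductSpace ℂ H]

lemma IsNormalFunctional.exists_norm_le {ω : B H →ₗ[ℂ] ℂ} (hω : IsNormalFunctional H ω) :
    ∃ c, ∀ T, ‖ω T‖ ≤ c * ‖T‖ := by
  obtain ⟨x, y, hx, hy, hω⟩ := hω
  refine ⟨∑' n, ‖y n‖ * ‖x n‖, fun T => ?_⟩
  rw [hω, ← tsum_mul_right]
  refine tsum_of_norm_bounded ((summable_norm_mul_norm hx hy).mul_right _).hasSum fun n => ?_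
  simpa [mul_comm] using T.norm_inner_apply_le (x n) (y n)

lemma continuous_id_weakStar : @Continuous (B H) (B H) _ (weakStarTopology H) id :=
  continuous_induced_rng.2 <| continuous_pi fun ω =>
    let ⟨c, hc⟩ := ω.2.exists_norm_le
    (LinearMap.mkContinuous ω.1 c hc).continuous

lemma WStarClosed.isClosed {X : Set (B H)} (hX : WStarClosed H X) : IsClosed X :=
  @IsClosed.preimage _ _ _ (weakStarTopology H) id continuous_id_weakStar X hX

lemma tendsto_weakStar_iff {ι : Type*} {F : Filter ι} {g : ι → B H} {A : B H} :
    Tendsto g F (@nhds _ (weakStarTopology H) A) ↔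
      ∀ ω : {ω : B H →ₗ[ℂ] ℂ // IsNormalFunctional H ω},
        Tendsto (fun i => ω.1 (g i)) F (𝓝 (ω.1 A)) := by
  rw [weakStarTopology, nhds_induced, tendsto_comap_iff, tendsto_pi_nhds]
  rfl

lemma isNormalFunctional_inner_apply (ξ η : H) :
    IsNormalFunctional H ((innerSL ℂ η).comp (ContinuousLinearMap.apply ℂ H ξ) : B H →ₗ[ℂ] ℂ) := by
  refine ⟨Pi.single 0 ξ, Pi.single 0 η, ?_, ?_, fun T => ?_⟩
  · exact summable_of_ne_finset_zero (s := {0}) fun n hn => by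
      simp [Finset.notMem_singleton.1 hn]
  · exact summable_of_ne_finset_zero (s := {0}) fun n hn => by
      simp [Finset.notMem_singleton.1 hn]
  · rw [tsum_eq_single 0 fun n hn => by simp [hn]]
    simp

lemma tendsto_inner_apply_of_tendsto_weakStar {ι : Type*} {F : Filter ι} {g : ι → B H} {A : B H}
    (h : Tendsto g F (@nhds _ (weakStarTopology H) A)) (ξ η : H) :
    Tendsto (fun i => ⟪η, g i ξ⟫_ℂ) F (𝓝 ⟪η, A ξ⟫_ℂ) :=
  tendsto_weakStar_iff.1 h ⟨_, isNormalFunctional_inner_apply ξ η⟩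

lemma tendsto_weakStar_unique {ι : Type*} {F : Filter ι} [F.NeBot] {g : ι → B H} {A A' : B H}
    (h : Tendsto g F (@nhds _ (weakStarTopology H) A))
    (h' : Tendsto g F (@nhds _ (weakStarTopology H) A')) : A = A' :=
  ContinuousLinearMap.ext fun ξ => ext_inner_left ℂ fun η =>
    tendsto_nhds_unique (tendsto_inner_apply_of_tendsto_weakStar h ξ η)
      (tendsto_inner_apply_of_tendsto_weakStar h' ξ η)

lemma tendsto_weakStar_of_tendsto_inner_apply {ι : Type*} {F : Filter ι} {g : ι → B H} {A : B H}
    {C : ℝ} (hg : ∀ i, ‖g i‖ ≤ C) (hA : ∀ ξ η, Tendsto (fun i => ⟪η, g i ξ⟫_ℂ) F (𝓝 ⟪η, A ξ⟫_ℂ)) :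
    Tendsto g F (@nhds _ (weakStarTopology H) A) := by
  refine tendsto_weakStar_iff.2 fun ⟨ω, x, y, hx, hy, hω⟩ => ?_
  simp only [hω]
  refine tendsto_tsum_of_dominated_convergence ((summable_norm_mul_norm hx hy).mul_left C)
    (fun n => hA (x n) (y n)) (Eventually.of_forall fun i n => ?_)
  exact ((g i).norm_inner_apply_le _ _).trans (mul_le_mul_of_nonneg_right (hg i) (by positivity))

end WeakStar

section Arveson

variable {H : Type*} [NormedAddCommGroup H] [InnerProductSpace ℂ H]

lemma arveson_nonneg (T : B H) (X : Set (B H)) : 0 ≤ arveson T X :=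
  Real.iSup_nonneg fun _ => Real.iInf_nonneg fun _ => norm_nonneg _

lemma bddBelow_range_norm_sub_apply (T : B H) (X : Set (B H)) (ξ : H) :
    BddBelow (Set.range fun S : X => ‖T ξ - S.1 ξ‖) :=
  ⟨0, by rintro _ ⟨S, rfl⟩; exact norm_nonneg _⟩

lemma iInf_norm_sub_apply_le_norm_sub (T : B H) {X : Set (B H)} {S : B H} (hS : S ∈ X)
    (ξ : {ξ : H // ‖ξ‖ = 1}) : ⨅ S : X, ‖T ξ.1 - S.1 ξ.1‖ ≤ ‖T - S‖ :=
  calc ⨅ S : X, ‖T ξ.1 - S.1 ξ.1‖ ≤ ‖(T - S) ξ.1‖ :=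
        ciInf_le (bddBelow_range_norm_sub_apply T X ξ.1) ⟨S, hS⟩
    _ ≤ ‖T - S‖ := by simpa [ξ.2] using (T - S).le_opNorm ξ.1

lemma arveson_le_norm_sub (T : B H) {X : Set (B H)} {S : B H} (hS : S ∈ X) :
    arveson T X ≤ ‖T - S‖ :=
  Real.iSup_le (iInf_norm_sub_apply_le_norm_sub T hS) (norm_nonneg _)

lemma arveson_anti (T : B H) {X Y : Set (B H)} (hXY : X ⊆ Y) (hX : X.Nonempty) :
    arveson T Y ≤ arveson T X := by
  obtain ⟨S, hS⟩ := hX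
  have : Nonempty X := ⟨⟨S, hS⟩⟩
  refine ciSup_mono ⟨‖T - S‖, ?_⟩ fun ξ => le_ciInf fun S' =>
    ciInf_le (bddBelow_range_norm_sub_apply T Y ξ.1) ⟨S'.1, hXY S'.2⟩
  rintro _ ⟨ξ, rfl⟩
  exact iInf_norm_sub_apply_le_norm_sub T hS ξ

lemma arveson_eq_zero_of_forall_mem_closure {T : B H} {X : Set (B H)}
    (h : ∀ ξ : H, T ξ ∈ closure ((fun S : B H => S ξ) '' X)) : arveson T X = 0 := by
  refine le_antisymm (Real.iSup_le (fun ξ => le_of_forall_pos_le_add fun ε hε => ?_) le_rfl)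
    (arveson_nonneg T X)
  obtain ⟨_, ⟨S, hS, rfl⟩, hdist⟩ := Metric.mem_closure_iff.1 (h ξ.1) ε hε
  calc ⨅ S : X, ‖T ξ.1 - S.1 ξ.1‖ ≤ ‖T ξ.1 - S ξ.1‖ :=
        ciInf_le (bddBelow_range_norm_sub_apply T X ξ.1) ⟨S, hS⟩
    _ ≤ 0 + ε := by rw [zero_add, ← dist_eq_norm]; exact hdist.le

/-- Since `α(T, X) = 0` exactly when `T ∈ Ref X`, this says `Ref X ⊆ X`. -/
def IsReflexive (X : Set (B H)) : Prop := ∀ T : B H, arveson T X = 0 → T ∈ X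

lemma Hyperreflexive.isReflexive {X : Set (B H)} (hX : Hyperreflexive X) (hcl : IsClosed X)
    (hne : X.Nonempty) : IsReflexive X := by
  intro T hT
  obtain ⟨k, -, hk⟩ := hX
  have h := hk T
  rw [hT, mul_zero] at h
  exact hcl.closure_subset
    ((Metric.mem_closure_iff_infDist_zero hne).2 (le_antisymm h Metric.infDist_nonneg))

lemma Hyperreflexive.of_infDist_le {X Y : Set (B H)} (hX : Hyperreflexive X) (hYX : Y ⊆ X)
    (hY : Y.Nonempty) {a b : ℝ} (ha : 0 < a) (hb : 0 ≤ b)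
    (h : ∀ T, Metric.infDist T Y ≤ a * arveson T Y + b * Metric.infDist T X) :
    Hyperreflexive Y ∧ hyperConst Y ≤ a + b * hyperConst X := by
  have hmem : ∀ k ∈ hyperSet X, a + b * k ∈ hyperSet Y := by
    rintro k ⟨hk, hkX⟩
    refine ⟨by positivity, fun T => ?_⟩
    calc Metric.infDist T Y ≤ a * arveson T Y + b * (k * arveson T X) :=
          (h T).trans (by gcongr; exact hkX T)
      _ ≤ a * arveson T Y + b * (k * arveson T Y) := by gcongr; exact arveson_anti T hYX hY
      _ = (a + b * k) * arveson T Y := by ring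
  refine ⟨⟨_, hmem _ hX.some_mem⟩, ?_⟩
  -- `k(X)` lies in the closure of the constants for `X`, where the bound persists
  have hclosed : IsClosed {k : ℝ | hyperConst Y ≤ a + b * k} :=
    isClosed_le continuous_const (continuous_const.add (continuous_const.mul continuous_id))
  exact hclosed.closure_subset_iff.2
    (fun k hk => csInf_le ⟨0, fun _ hk' => hk'.1.le⟩ (hmem k hk))
    (csInf_mem_closure hX ⟨0, fun _ hk => hk.1.le⟩)

variable {Φ : B H →L[ℂ] B H} {l : ℝ}

lemma apply_eq_self_of_mem_range (hΦ : Φ.comp Φ = Φ) {T : B H} (hT : T ∈ Set.range Φ) :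
    Φ T = T := by
  obtain ⟨S, rfl⟩ := hT
  exact DFunLike.congr_fun hΦ S

lemma mem_lamSet_of_lam_le (hne : (lamSet Φ).Nonempty) (hl : 0 < l) (hlam : lam Φ ≤ l) :
    l ∈ lamSet Φ := by
  refine ⟨hl, fun T => ?_⟩
  have hclosed : IsClosed {k : ℝ | ‖T - Φ T‖ ≤ k * arveson T (Set.range Φ)} :=
    isClosed_le continuous_const (continuous_id.mul continuous_const)
  have hlamT : lam Φ ∈ {k : ℝ | ‖T - Φ T‖ ≤ k * arveson T (Set.range Φ)} :=
    hclosed.closure_subset_iff.2 (fun k hk => hk.2 T)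
      (csInf_mem_closure hne ⟨0, fun _ hk => hk.1.le⟩)
  exact hlamT.trans (mul_le_mul_of_nonneg_right hlam (arveson_nonneg _ _))

lemma isReflexive_range_of_mem_lamSet (h : l ∈ lamSet Φ) : IsReflexive (Set.range Φ) :=
  fun T hT => ⟨T, (sub_eq_zero.1 (norm_le_zero_iff.1 (by simpa [hT] using h.2 T))).symm⟩

lemma norm_apply_le_of_mem_lamSet (h : l ∈ lamSet Φ) (T : B H) : ‖Φ T‖ ≤ (1 + l) * ‖T‖ := by
  have hT : ‖T - Φ T‖ ≤ l * ‖T‖ := by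
    simpa using (h.2 T).trans (mul_le_mul_of_nonneg_left
      (arveson_le_norm_sub T ⟨0, map_zero Φ⟩) h.1.le)
  calc ‖Φ T‖ = ‖T - (T - Φ T)‖ := by rw [sub_sub_cancel]
    _ ≤ ‖T‖ + ‖T - Φ T‖ := norm_sub_le _ _
    _ ≤ (1 + l) * ‖T‖ := by linarith

lemma norm_sub_apply_le_of_mem_lamSet (h : l ∈ lamSet Φ) {X : Set (B H)}
    (hX : X ⊆ Set.range Φ) (hXne : X.Nonempty) (T A : B H) :
    ‖T - Φ A‖ ≤ l * arveson T X + (1 + l) * ‖T - A‖ :=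
  calc ‖T - Φ A‖ = ‖(T - Φ T) + Φ (T - A)‖ := by rw [map_sub]; abel_nf
    _ ≤ ‖T - Φ T‖ + ‖Φ (T - A)‖ := norm_add_le _ _
    _ ≤ l * arveson T X + (1 + l) * ‖T - A‖ :=
      add_le_add ((h.2 T).trans (mul_le_mul_of_nonneg_left (arveson_anti T hX hXne) h.1.le))
        (norm_apply_le_of_mem_lamSet h _)

end Arveson

section Orbit

variable {H : Type*} [NormedAddCommGroup H] [InnerProductSpace ℂ H]

/-- The paper's `[M ξ]`. -/
def orbitClosure (M : Submodule ℂ (B H)) (ξ : H) : Submodule ℂ H :=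
  (M.map (ContinuousLinearMap.apply ℂ H ξ : B H →ₗ[ℂ] H)).topologicalClosure

lemma coe_orbitClosure (M : Submodule ℂ (B H)) (ξ : H) :
    (orbitClosure M ξ : Set H) = closure ((fun S : B H => S ξ) '' M) := by
  rw [orbitClosure, Submodule.topologicalClosure_coe, Submodule.map_coe]
  rfl

lemma apply_mem_orbitClosure {M : Submodule ℂ (B H)} {S : B H} (hS : S ∈ M) (ξ : H) :
    S ξ ∈ orbitClosure M ξ :=
  Submodule.le_topologicalClosure _ ⟨S, hS, rfl⟩

open Module.End in
lemma orbitClosure_mem_invtSubmodule {M : Submodule ℂ (B H)} {A : B H}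
    (hA : ∀ S ∈ M, A * S ∈ M) (ξ : H) : orbitClosure M ξ ∈ invtSubmodule (A : H →ₗ[ℂ] H) := by
  refine Submodule.topologicalClosure_minimal _ ?_
    ((Submodule.isClosed_topologicalClosure _).preimage A.continuous)
  rintro _ ⟨S, hS, rfl⟩
  exact apply_mem_orbitClosure (hA S hS) ξ

variable [CompleteSpace H]

instance (M : Submodule ℂ (B H)) (ξ : H) : (orbitClosure M ξ).HasOrthogonalProjection := by
  unfold orbitClosure; infer_instance

end Orbit
section Masa

variable {H : Type*} [NormedAddCommGroup H] [InnerProductSpace ℂ H] [CompleteSpace H]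
  {D : StarSubalgebra ℂ (B H)}

open Module.End in
lemma starProjection_mem_of_forall_mem_invtSubmodule (hD : IsMasa D) (K : Submodule ℂ H)
    [K.HasOrthogonalProjection] (hK : ∀ A ∈ D, K ∈ invtSubmodule (A : H →ₗ[ℂ] H)) :
    K.starProjection ∈ D :=
  hD.2 _ fun A hA => ContinuousLinearMap.commute_starProjection_of_mem_invtSubmodule (hK A hA)
    (by rw [← ContinuousLinearMap.star_eq_adjoint]; exact hK _ (star_mem hA))

/-- The projections `P` onto `[M ξ]` and `Q` onto `[D ξ]` lie in `D`; `(1 - P) A Q = 0`, hence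
`(1 - P) Φ(A) Q = Φ((1 - P) A Q) = 0`, and applying this to `ξ = Q ξ` gives `Φ(A) ξ ∈ [M ξ]`. -/
lemma apply_mem_orbitClosure_of_bimoduleMap (hD : IsMasa D) (Φ : B H →L[ℂ] B H)
    (hΦ : ∀ A ∈ D, ∀ C ∈ D, ∀ T : B H, Φ (A * T * C) = A * Φ T * C)
    {M : Submodule ℂ (B H)} (hM : IsBimodule D M) {A : B H} (hA : A ∈ M) (ξ : H) :
    Φ A ξ ∈ orbitClosure M ξ := by
  set Dm : Submodule ℂ (B H) := Subalgebra.toSubmodule D.toSubalgebra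
  set P := (orbitClosure M ξ).starProjection
  set Q := (orbitClosure Dm ξ).starProjection
  have hP : P ∈ D := starProjection_mem_of_forall_mem_invtSubmodule hD _ fun C hC =>
    orbitClosure_mem_invtSubmodule (fun S hS => by simpa using hM C hC 1 (one_mem D) S hS) ξ
  have hQ : Q ∈ D := starProjection_mem_of_forall_mem_invtSubmodule hD _ fun C hC =>
    orbitClosure_mem_invtSubmodule (M := Dm) (fun S hS => show C * S ∈ D from mul_mem hC hS) ξ
  have hQξ : Q ξ = ξ := Submodule.starProjection_eq_self_iff.2
    (by simpa using apply_mem_orbitClosure (M := Dm) (one_mem D) ξ)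
  have hvanish : (1 - P) * A * Q = 0 := by
    have hker : orbitClosure Dm ξ ≤ LinearMap.ker (((1 - P) * A : B H) : H →ₗ[ℂ] H) := by
      refine Submodule.topologicalClosure_minimal _ ?_ (ContinuousLinearMap.isClosed_ker _)
      rintro _ ⟨C, hC, rfl⟩
      have hAC : A (C ξ) ∈ orbitClosure M ξ :=
        apply_mem_orbitClosure (S := A * C) (by simpa using hM 1 (one_mem D) C hC A hA) ξ
      simp only [LinearMap.mem_ker, ContinuousLinearMap.coe_coe, ContinuousLinearMap.apply_apply,
        mul_apply_eq_comp, sub_apply, one_apply_eq_self, sub_eq_zero]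
      exact (Submodule.starProjection_eq_self_iff.2 hAC).symm
    ext x
    exact hker (Submodule.starProjection_apply_mem _ x)
  have h : ((1 - P) * Φ A * Q) ξ = 0 := by
    rw [← hΦ _ (sub_mem (one_mem D) hP) _ hQ, hvanish, map_zero, zero_apply]
  rwa [mul_apply_eq_comp, mul_apply_eq_comp, hQξ, sub_apply, one_apply_eq_self, sub_eq_zero,
    eq_comm, Submodule.starProjection_eq_self_iff] at h

lemma IsReflexive.apply_mem (hD : IsMasa D) {Φ : B H →L[ℂ] B H}
    (hΦ : ∀ A ∈ D, ∀ C ∈ D, ∀ T : B H, Φ (A * T * C) = A * Φ T * C)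
    {M : Submodule ℂ (B H)} (hM : IsBimodule D M) (hMr : IsReflexive (M : Set (B H)))
    {A : B H} (hA : A ∈ M) : Φ A ∈ M :=
  hMr _ <| arveson_eq_zero_of_forall_mem_closure fun ξ => by
    rw [← coe_orbitClosure]
    exact apply_mem_orbitClosure_of_bimoduleMap hD Φ hΦ hM hA ξ

lemma IsSchurMultiplier.isBimodule_range {Φ : B H →L[ℂ] B H} (hΦ : IsSchurMultiplier D Φ) :
    IsBimodule D (LinearMap.range (Φ : B H →ₗ[ℂ] B H)) := by
  rintro A hA C hC _ ⟨T, rfl⟩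
  exact ⟨A * T * C, hΦ.2 A hA C hC T⟩

/-- Schur multipliers leave the reflexive bimodule `ran Φₙ₊₁` invariant, which upgrades
`Φₙ₊₁ Φₙ = Φₙ₊₁` to `Φₙ Φₙ₊₁ = Φₙ₊₁`. -/
lemma MemFH.apply_apply_of_le (hD : IsMasa D) {Φ : ℕ → B H →L[ℂ] B H}
    (hΦ : ∀ n, MemFH D (Φ n)) (hdec : ∀ n, (Φ (n + 1)).comp (Φ n) = Φ (n + 1)) {m n : ℕ}
    (hmn : m ≤ n) (X : B H) : Φ m (Φ n X) = Φ n X := by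
  induction n, hmn using Nat.le_induction generalizing X with
  | base => exact apply_eq_self_of_mem_range (hΦ m).1.2 ⟨X, rfl⟩
  | succ n _ ih =>
    set Y := Φ (n + 1) X
    have hrefl : IsReflexive (LinearMap.range (Φ (n + 1) : B H →ₗ[ℂ] B H) : Set (B H)) := by
      rw [LinearMap.coe_range, ContinuousLinearMap.coe_coe]
      exact isReflexive_range_of_mem_lamSet (hΦ (n + 1)).2.some_mem
    obtain ⟨Z, hZ⟩ : Φ n Y ∈ LinearMap.range (Φ (n + 1) : B H →ₗ[ℂ] B H) :=
      IsReflexive.apply_mem hD (hΦ n).1.1.2 (IsSchurMultiplier.isBimodule_range (hΦ (n + 1)).1.1)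
        hrefl ⟨X, rfl⟩
    have hY : Φ n Y = Y :=
      calc Φ n Y = Φ (n + 1) (Φ n Y) :=
            (apply_eq_self_of_mem_range (hΦ (n + 1)).1.2 ⟨Z, hZ⟩).symm
        _ = Φ (n + 1) Y := DFunLike.congr_fun (hdec n) Y
        _ = Y := apply_eq_self_of_mem_range (hΦ (n + 1)).1.2 ⟨X, rfl⟩
    calc Φ m Y = Φ m (Φ n Y) := by rw [hY]
      _ = Φ n Y := ih Y
      _ = Y := hY

end Masa

section Limit

variable {H : Type*} [NormedAddCommGroup H] [InnerProductSpace ℂ H] [CompleteSpace H]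

/-- Take a weak* limit of the `Sₙ` along an ultrafilter finer than `atTop`; the `Sₙ` are bounded
because `‖T - Sₙ‖ ≤ c`. -/
lemma exists_mem_inter_iInter_range_norm_sub_le {U : Set (B H)} (hU : WStarClosed H U)
    {Φ : ℕ → B H →L[ℂ] B H} (hcont : ∀ n, WStarContinuous H (Φ n)) {S : ℕ → B H}
    (hSU : ∀ n, S n ∈ U) (hfix : ∀ m n, m ≤ n → Φ m (S n) = S n) (T : B H) {c : ℝ}
    (hc : ∀ n, ‖T - S n‖ ≤ c) :
    ∃ S' ∈ U ∩ ⋂ m, Set.range (Φ m), ‖T - S'‖ ≤ c := by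
  set 𝒰 := Ultrafilter.of (atTop : Filter ℕ)
  have hbdd : ∀ n, ‖S n‖ ≤ ‖T‖ + c := fun n =>
    (norm_le_norm_add_norm_sub' (S n) T).trans (by rw [norm_sub_rev]; linarith [hc n])
  obtain ⟨S', hS'⟩ := exists_tendsto_inner_apply_of_norm_le 𝒰 hbdd
  have hw := tendsto_weakStar_of_tendsto_inner_apply hbdd hS'
  refine ⟨S', ⟨?_, Set.mem_iInter.2 fun m => ⟨S', ?_⟩⟩, ?_⟩
  · exact @IsClosed.mem_of_tendsto _ (weakStarTopology H) _ _ _ _ _ _ hU hw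
      (Eventually.of_forall hSU)
  · have hlim : Tendsto S 𝒰 (@nhds _ (weakStarTopology H) (Φ m S')) :=
      ((@Continuous.tendsto _ _ (weakStarTopology H) (weakStarTopology H) _ (hcont m) S').comp
        hw).congr'
        (((eventually_ge_atTop m).filter_mono (Ultrafilter.of_le _)).mono fun n hn => hfix m n hn)
    exact tendsto_weakStar_unique hlim hw
  · refine norm_le_of_tendsto_inner_apply (F := (𝒰 : Filter ℕ)) hc fun ξ η => ?_
    simpa [inner_sub_right] using (hS' ξ η).const_sub ⟪η, T ξ⟫_ℂ

lemma infDist_inter_iInter_range_le {U : Submodule ℂ (B H)} (hU : WStarClosed H (U : Set (B H)))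
    {Φ : ℕ → B H →L[ℂ] B H} {l : ℝ} (hcont : ∀ n, WStarContinuous H (Φ n))
    (hl : ∀ n, l ∈ lamSet (Φ n)) (hUinv : ∀ n, ∀ A ∈ U, Φ n A ∈ U)
    (hfix : ∀ m n, m ≤ n → ∀ X, Φ m (Φ n X) = Φ n X) (T : B H) :
    Metric.infDist T ((U : Set (B H)) ∩ ⋂ n, Set.range (Φ n)) ≤
      l * arveson T ((U : Set (B H)) ∩ ⋂ n, Set.range (Φ n)) +
        (1 + l) * Metric.infDist T (U : Set (B H)) := by
  set W := (U : Set (B H)) ∩ ⋂ n, Set.range (Φ n)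
  have hWne : W.Nonempty := ⟨0, U.zero_mem, Set.mem_iInter.2 fun n => ⟨0, map_zero _⟩⟩
  have hl1 : 0 < 1 + l := by linarith [(hl 0).1]
  have key : ∀ A ∈ U, Metric.infDist T W ≤ l * arveson T W + (1 + l) * ‖T - A‖ := by
    intro A hA
    obtain ⟨S', hS'W, hS'⟩ := exists_mem_inter_iInter_range_norm_sub_le hU hcont
      (fun n => hUinv n A hA) (fun m n hmn => hfix m n hmn A) T fun n =>
        norm_sub_apply_le_of_mem_lamSet (hl n) (fun _ hX => Set.mem_iInter.1 hX.2 n) hWne T A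
    exact ((Metric.infDist_le_dist_of_mem hS'W).trans_eq (dist_eq_norm _ _)).trans hS'
  have h : (Metric.infDist T W - l * arveson T W) / (1 + l) ≤ Metric.infDist T U :=
    (Metric.le_infDist ⟨0, U.zero_mem⟩).2 fun A hA => by
      rw [div_le_iff₀ hl1, dist_eq_norm]; linarith [key A hA]
  rw [div_le_iff₀ hl1] at h
  linarith

end Limit

end SchurHyper

theorem stmt15_general {H : Type*} [NormedAddCommGroup H] [InnerProductSpace ℂ H] [CompleteSpace H]
    (D : StarSubalgebra ℂ (B H)) (hD : IsMasa D)
    (U : Submodule ℂ (B H)) (hUbim : IsBimodule D U)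
    (hUcl : WStarClosed H (U : Set (B H))) (hUhr : Hyperreflexive (U : Set (B H)))
    (V : Submodule ℂ (B H))
    (l : ℝ) (hl : 0 < l) (Φ : ℕ → (B H →L[ℂ] B H))
    (hΦ : ∀ n, MemFH D (Φ n))
    (hΦdec : ∀ n, (Φ (n + 1)).comp (Φ n) = Φ (n + 1))
    (hV : (V : Set (B H)) = ⋂ n, Set.range ⇑(Φ n))
    (hΦl : ∀ n, lam (Φ n) ≤ l) :
    Hyperreflexive ((U : Set (B H)) ∩ (V : Set (B H))) ∧
    hyperConst ((U : Set (B H)) ∩ (V : Set (B H))) ≤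
      l + (1 + l) * hyperConst (U : Set (B H)) := by
  have hlam : ∀ n, l ∈ lamSet (Φ n) := fun n => mem_lamSet_of_lam_le (hΦ n).2 hl (hΦl n)
  have hUinv : ∀ n, ∀ A ∈ U, Φ n A ∈ U := fun n A hA =>
    IsReflexive.apply_mem hD (hΦ n).1.1.2 hUbim (hUhr.isReflexive hUcl.isClosed ⟨0, U.zero_mem⟩) hA
  rw [hV]
  refine hUhr.of_infDist_le Set.inter_subset_left ?_ hl (by linarith)
    (infDist_inter_iInter_range_le hUcl (fun n => (hΦ n).1.1.1) hlam hUinv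
      fun _ _ hmn => MemFH.apply_apply_of_le hD hΦ hΦdec hmn)
  exact ⟨0, U.zero_mem, Set.mem_iInter.2 fun n => ⟨0, map_zero _⟩⟩

/-- if `U` is a hyperreflexive weak* closed masa-bimodule and `V`
is an approximately H-injective masa-bimodule (witnessed by a uniformly bounded
decreasing sequence `(Φₙ)` in `𝔉H` with `λ(Φₙ) ≤ λ` and `V = ⋂ₙ ran Φₙ`), then
`W = U ∩ V` is hyperreflexive and `k(W) ≤ λ + (1 + λ)·k(U)`. -/
theorem stmt15 {H : Type*} [NormedAddCommGroup H] [InnerProductSpace ℂ H] [CompleteSpace H]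
    [TopologicalSpace.SeparableSpace H]
    (D : StarSubalgebra ℂ (B H)) (hD : IsMasa D)
    (U : Submodule ℂ (B H)) (hUbim : IsBimodule D U)
    (hUcl : WStarClosed H (U : Set (B H))) (hUhr : Hyperreflexive (U : Set (B H)))
    (V : Submodule ℂ (B H)) (hVbim : IsBimodule D V)
    (l : ℝ) (hl : 0 < l) (Φ : ℕ → (B H →L[ℂ] B H))
    (hΦ : ∀ n, MemFH D (Φ n))
    (hΦbdd : BddAbove (Set.range fun n => ‖Φ n‖))
    (hΦdec : ∀ n, (Φ (n + 1)).comp (Φ n) = Φ (n + 1))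
    (hV : (V : Set (B H)) = ⋂ n, Set.range ⇑(Φ n))
    (hΦl : ∀ n, lam (Φ n) ≤ l) :
    Hyperreflexive ((U : Set (B H)) ∩ (V : Set (B H))) ∧
    hyperConst ((U : Set (B H)) ∩ (V : Set (B H))) ≤
      l + (1 + l) * hyperConst (U : Set (B H)) :=
  stmt15_general D hD U hUbim hUcl hUhr V l hl Φ hΦ hΦdec hV hΦl
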